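/- arXiv:1601.06562 — 7 statements merged into one kernel-verified Lean document; each statement's English description precedes it below -/
import Mathlib

section
/- If random variables M, X, Y, Z on a finite probability space satisfy the Markov chains M − X − (Y,Z) and M − (Y,Z) − X, and x ∼ x' (i.e., there exist y, z with p(x,y) > 0, p(x',y) > 0, p(z|x,y) > 0, p(z|x',y) > 0), then p(m|x) = p(m|x') for every value m of M. -/
open Finset

/-- If `M − X − (Y,Z)` and `M − (Y,Z) − X` are Markov chains and `x ∼ x'`
(there exist `y, z` with `p(x,y) > 0`, `p(x',y) > 0`, `p(z|x,y) > 0`,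
`p(z|x',y) > 0`), then `p(m|x) = p(m|x')` for every `m`. -/
theorem stmt_1 {M X Y Z : Type} [Fintype M] [Fintype X] [Fintype Y] [Fintype Z]
    (p : M → X → Y → Z → ℝ)
    (hnn : ∀ m x y z, 0 ≤ p m x y z)
    (hsum : ∑ m, ∑ x, ∑ y, ∑ z, p m x y z = 1)
    (pX : X → ℝ) (hpX : ∀ x, pX x = ∑ m, ∑ y, ∑ z, p m x y z)
    (pMX : M → X → ℝ) (hpMX : ∀ m x, pMX m x = ∑ y, ∑ z, p m x y z)
    (pXY : X → Y → ℝ) (hpXY : ∀ x y, pXY x y = ∑ m, ∑ z, p m x y z)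
    (pXYZ : X → Y → Z → ℝ) (hpXYZ : ∀ x y z, pXYZ x y z = ∑ m, p m x y z)
    (pYZ : Y → Z → ℝ) (hpYZ : ∀ y z, pYZ y z = ∑ m, ∑ x, p m x y z)
    (pMYZ : M → Y → Z → ℝ) (hpMYZ : ∀ m y z, pMYZ m y z = ∑ x, p m x y z)
    -- Markov chain M − X − (Y,Z): p(m|x,y,z) = p(m|x) whenever p(x,y,z) > 0
    (hMC1 : ∀ m x y z, pXYZ x y z > 0 →
      p m x y z / pXYZ x y z = pMX m x / pX x)
    -- Markov chain M − (Y,Z) − X: p(m|x,y,z) = p(m|y,z) whenever p(x,y,z) > 0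
    (hMC2 : ∀ m x y z, pXYZ x y z > 0 →
      p m x y z / pXYZ x y z = pMYZ m y z / pYZ y z)
    (x x' : X)
    -- x ∼ x'
    (hsim : ∃ (y : Y) (z : Z), pXY x y > 0 ∧ pXY x' y > 0 ∧
      pXYZ x y z / pXY x y > 0 ∧ pXYZ x' y z / pXY x' y > 0) :
    ∀ m, pMX m x / pX x = pMX m x' / pX x' := by
  obtain ⟨y, z, hxy, hx'y, h1, h2⟩ := hsim
  have hnn1 : 0 ≤ pXYZ x y z := by
    rw [hpXYZ]; exact Finset.sum_nonneg fun m _ => hnn m x y z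
  have hnn2 : 0 ≤ pXYZ x' y z := by
    rw [hpXYZ]; exact Finset.sum_nonneg fun m _ => hnn m x' y z
  have hp1 : pXYZ x y z > 0 := by
    rcases hnn1.lt_or_eq with h | h
    · exact h
    · exfalso; rw [← h, zero_div] at h1; exact lt_irrefl 0 h1
  have hp2 : pXYZ x' y z > 0 := by
    rcases hnn2.lt_or_eq with h | h
    · exact h
    · exfalso; rw [← h, zero_div] at h2; exact lt_irrefl 0 h2
  intro m
  calc pMX m x / pX x = p m x y z / pXYZ x y z := (hMC1 m x y z hp1).symm
    _ = pMYZ m y z / pYZ y z := hMC2 m x y z hp1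
    _ = p m x' y z / pXYZ x' y z := (hMC2 m x' y z hp2).symm
    _ = pMX m x' / pX x' := hMC1 m x' y z hp2
end

section
/- Suppose random variables M, X, Y, Z on a finite probability space satisfy the Markov chains M − X − (Y,Z), M − (Y,Z) − X, and Z − (M,Y) − X. If x, x' ∈ 𝒳 and y ∈ 𝒴 satisfy p(x,y) > 0 and p(x',y) > 0, and there exists a transcript value m with p(m|x) > 0 and p(m|x') > 0, then p(z|x,y) = p(z|x',y) for every z ∈ 𝒵. -/
open Finset

/-- Under the Markov chains `M − X − (Y,Z)`, `M − (Y,Z) − X`, `Z − (M,Y) − X`,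
if `p(x,y) > 0`, `p(x',y) > 0` and some transcript `m` satisfies `p(m|x) > 0`
and `p(m|x') > 0`, then `p(z|x,y) = p(z|x',y)` for every `z`. -/
theorem stmt_2 {M X Y Z : Type} [Fintype M] [Fintype X] [Fintype Y] [Fintype Z]
    (p : M → X → Y → Z → ℝ)
    (hnn : ∀ m x y z, 0 ≤ p m x y z)
    (hsum : ∑ m, ∑ x, ∑ y, ∑ z, p m x y z = 1)
    (pX : X → ℝ) (hpX : ∀ x, pX x = ∑ m, ∑ y, ∑ z, p m x y z)
    (pMX : M → X → ℝ) (hpMX : ∀ m x, pMX m x = ∑ y, ∑ z, p m x y z)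
    (pXY : X → Y → ℝ) (hpXY : ∀ x y, pXY x y = ∑ m, ∑ z, p m x y z)
    (pXYZ : X → Y → Z → ℝ) (hpXYZ : ∀ x y z, pXYZ x y z = ∑ m, p m x y z)
    (pYZ : Y → Z → ℝ) (hpYZ : ∀ y z, pYZ y z = ∑ m, ∑ x, p m x y z)
    (pMYZ : M → Y → Z → ℝ) (hpMYZ : ∀ m y z, pMYZ m y z = ∑ x, p m x y z)
    (pMY : M → Y → ℝ) (hpMY : ∀ m y, pMY m y = ∑ x, ∑ z, p m x y z)
    (pMXY : M → X → Y → ℝ) (hpMXY : ∀ m x y, pMXY m x y = ∑ z, p m x y z)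
    -- Markov chain M − X − (Y,Z)
    (hMC1 : ∀ m x y z, pXYZ x y z > 0 →
      p m x y z / pXYZ x y z = pMX m x / pX x)
    -- Markov chain M − (Y,Z) − X
    (hMC2 : ∀ m x y z, pXYZ x y z > 0 →
      p m x y z / pXYZ x y z = pMYZ m y z / pYZ y z)
    -- Markov chain Z − (M,Y) − X
    (hMC3 : ∀ m x y z, pMXY m x y > 0 →
      p m x y z / pMXY m x y = pMYZ m y z / pMY m y)
    (x x' : X) (y : Y)
    (hx : pXY x y > 0) (hx' : pXY x' y > 0)
    (hm : ∃ m, pMX m x / pX x > 0 ∧ pMX m x' / pX x' > 0) :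
    ∀ z, pXYZ x y z / pXY x y = pXYZ x' y z / pXY x' y := by

  obtain ⟨m, hm1, hm2⟩ := hm
  have key : ∀ (x₀ : X), pXY x₀ y > 0 → pMX m x₀ / pX x₀ > 0 →
      ∀ z, pXYZ x₀ y z / pXY x₀ y = pMYZ m y z / pMY m y := by
    intro x₀ hxy hratio z
    have hXnn : 0 ≤ pX x₀ := by
      rw [hpX]
      exact Finset.sum_nonneg fun _ _ => Finset.sum_nonneg fun _ _ =>
        Finset.sum_nonneg fun _ _ => hnn _ _ _ _
    have hXpos : 0 < pX x₀ := by
      rcases hXnn.eq_or_lt with h | h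
      · rw [← h, div_zero] at hratio; exact absurd hratio (lt_irrefl 0)
      · exact h
    -- every slice: p m x₀ y z = p(m|x₀) * pXYZ x₀ y z
    have hz : ∀ z, p m x₀ y z = pMX m x₀ / pX x₀ * pXYZ x₀ y z := by
      intro z
      have hnnXYZ : 0 ≤ pXYZ x₀ y z := by
        rw [hpXYZ]; exact Finset.sum_nonneg fun _ _ => hnn _ _ _ _
      rcases hnnXYZ.eq_or_lt with h | h
      · have hple : p m x₀ y z ≤ pXYZ x₀ y z := by
          rw [hpXYZ]
          exact Finset.single_le_sum (fun i _ => hnn i x₀ y z) (Finset.mem_univ m)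
        have h0 : p m x₀ y z = 0 := le_antisymm (by rw [← h] at hple; exact hple) (hnn _ _ _ _)
        rw [h0, ← h, mul_zero]
      · have h1 := hMC1 m x₀ y z h
        rw [div_eq_div_iff h.ne' hXpos.ne'] at h1
        field_simp
        linarith [h1]
    have hsumz : ∑ z, pXYZ x₀ y z = pXY x₀ y := by
      simp only [hpXYZ, hpXY]
      exact Finset.sum_comm
    have hMXY : pMXY m x₀ y = pMX m x₀ / pX x₀ * pXY x₀ y := by
      rw [hpMXY]
      calc ∑ z, p m x₀ y z = ∑ z, pMX m x₀ / pX x₀ * pXYZ x₀ y z :=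
            Finset.sum_congr rfl fun z _ => hz z
        _ = pMX m x₀ / pX x₀ * ∑ z, pXYZ x₀ y z := by rw [Finset.mul_sum]
        _ = pMX m x₀ / pX x₀ * pXY x₀ y := by rw [hsumz]
    have hMXYpos : 0 < pMXY m x₀ y := by rw [hMXY]; exact mul_pos hratio hxy
    have h3 : p m x₀ y z = pMYZ m y z / pMY m y * pMXY m x₀ y := by
      have := hMC3 m x₀ y z hMXYpos
      rw [div_eq_iff hMXYpos.ne'] at this
      exact this
    have hcancel : pXYZ x₀ y z = pMYZ m y z / pMY m y * pXY x₀ y := by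
      have h4 : pMX m x₀ / pX x₀ * pXYZ x₀ y z
          = pMX m x₀ / pX x₀ * (pMYZ m y z / pMY m y * pXY x₀ y) := by
        rw [← hz z, h3, hMXY]; ring
      exact mul_left_cancel₀ hratio.ne' h4
    rw [hcancel, mul_div_assoc, div_self hxy.ne', mul_one]
  intro z
  rw [key x hx hm1 z, key x' hx' hm2 z]
end

section
/- If each equivalence class 𝒳_i × 𝒴 (for the relation ≡) is column monochromatic, then the following protocol is perfectly secure: Alice sends the index i of the class containing her input x, and Bob samples Z according to p_i(z|y) := p_{Z|XY}(z|x,y) for any x ∈ 𝒳_i with p_{XY}(x,y) > 0. Formally, the induced joint distribution p(x, y, m, z) with m = index of the class of x and p(z|x,y,m) = p_i(z|y) satisfies correctness p(z|x,y) = p_{Z|XY}(z|x,y), and the Markov chains M − X − (Y,Z) and M − (Y,Z) − X. -/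
open Finset

/-- Alice's message: the equivalence class (as a finite set) of her input. -/
noncomputable def msgClass {X : Type} [Fintype X] (sim : X → X → Prop) (x : X) : Finset X :=
  letI := Classical.decPred (fun x' => Relation.ReflTransGen sim x x')
  Finset.univ.filter (fun x' => Relation.ReflTransGen sim x x')

/-- The joint distribution `p(m,x,y,z)` induced by the protocol in which Alice
sends the index of her equivalence class and Bob samples `Z` from
`p_i(z|y) = p_{Z|XY}(z|x,y)`. -/
noncomputable def jointProt {X Y Z : Type} [Fintype X] [DecidableEq X]
    (pXY : X → Y → ℝ) (pZ : Z → X → Y → ℝ) (sim : X → X → Prop)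
    (m : Finset X) (x : X) (y : Y) (z : Z) : ℝ :=
  if m = msgClass sim x then pXY x y * pZ z x y else 0

lemma sum_joint {X Y Z : Type} [Fintype X] [DecidableEq X]
    (pXY : X → Y → ℝ) (pZ : Z → X → Y → ℝ) (sim : X → X → Prop) (x : X) (y : Y) (z : Z) :
    ∑ m : Finset X, jointProt pXY pZ sim m x y z = pXY x y * pZ z x y := by
  simp [jointProt]

lemma msgClass_eq {X : Type} [Fintype X] {sim : X → X → Prop} (hsymm : Symmetric sim)
    {x x' : X} (h : sim x x') : msgClass sim x = msgClass sim x' := by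
  classical
  unfold msgClass
  ext a
  simp only [Finset.mem_filter, Finset.mem_univ, true_and]
  constructor
  · intro ha
    exact Relation.ReflTransGen.trans (Relation.ReflTransGen.single (hsymm h)) ha
  · intro ha
    exact Relation.ReflTransGen.trans (Relation.ReflTransGen.single h) ha

/-- If each equivalence class of `≡` is column monochromatic, then the protocol
"Alice sends her equivalence class, Bob samples from `p_i(·|y)`" is perfectly
secure: it is correct, and satisfies the Markov chains `M − X − (Y,Z)` and
`M − (Y,Z) − X`. -/
theorem stmt_4 {X Y Z : Type} [Fintype X] [Fintype Y] [Fintype Z] [DecidableEq X]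
    (pXY : X → Y → ℝ) (pZ : Z → X → Y → ℝ)
    (hXYnn : ∀ x y, 0 ≤ pXY x y) (hXYsum : ∑ x, ∑ y, pXY x y = 1)
    (hZnn : ∀ z x y, 0 ≤ pZ z x y) (hZsum : ∀ x y, ∑ z, pZ z x y = 1)
    -- full support of the marginals p_X and p_Y
    (hXsupp : ∀ x, ∑ y, pXY x y > 0) (hYsupp : ∀ y, ∑ x, pXY x y > 0)
    (sim : X → X → Prop)
    (hsim : ∀ x x', sim x x' ↔ ∃ (y : Y) (z : Z),
      pXY x y > 0 ∧ pXY x' y > 0 ∧ pZ z x y > 0 ∧ pZ z x' y > 0)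
    -- each equivalence class is column monochromatic
    (hmono : ∀ x x', Relation.ReflTransGen sim x x' →
      ∀ y, pXY x y > 0 → pXY x' y > 0 → ∀ z, pZ z x y = pZ z x' y) :
    -- correctness: p(z|x,y) = p_{Z|XY}(z|x,y)
    (∀ x y z, pXY x y > 0 →
      (∑ m : Finset X, jointProt pXY pZ sim m x y z) / pXY x y = pZ z x y) ∧
    -- Markov chain M − X − (Y,Z)
    (∀ (m : Finset X) (x : X) (y : Y) (z : Z),
      (∑ m' : Finset X, jointProt pXY pZ sim m' x y z) > 0 →
      jointProt pXY pZ sim m x y z / (∑ m' : Finset X, jointProt pXY pZ sim m' x y z)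
        = (∑ y', ∑ z', jointProt pXY pZ sim m x y' z')
            / (∑ m' : Finset X, ∑ y', ∑ z', jointProt pXY pZ sim m' x y' z')) ∧
    -- Markov chain M − (Y,Z) − X
    (∀ (m : Finset X) (x : X) (y : Y) (z : Z),
      (∑ m' : Finset X, jointProt pXY pZ sim m' x y z) > 0 →
      jointProt pXY pZ sim m x y z / (∑ m' : Finset X, jointProt pXY pZ sim m' x y z)
        = (∑ x', jointProt pXY pZ sim m x' y z)
            / (∑ m' : Finset X, ∑ x', jointProt pXY pZ sim m' x' y z)) := by
  have hsymm : Symmetric sim := by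
    intro a b h
    rw [hsim] at h ⊢
    obtain ⟨y, z, h1, h2, h3, h4⟩ := h
    exact ⟨y, z, h2, h1, h4, h3⟩
  refine ⟨?_, ?_, ?_⟩
  · intro x y z hx
    rw [sum_joint, mul_comm, mul_div_assoc, div_self (ne_of_gt hx), mul_one]
  · -- Markov chain M − X − (Y,Z)
    intro m x y z h
    rw [sum_joint] at h
    have hS : ∀ m' : Finset X, ∑ y', ∑ z', jointProt pXY pZ sim m' x y' z'
        = if m' = msgClass sim x then ∑ y', pXY x y' else 0 := by
      intro m'
      by_cases hm : m' = msgClass sim x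
      · simp [jointProt, hm, ← Finset.mul_sum, hZsum]
      · simp [jointProt, hm]
    have hD : ∑ m' : Finset X, ∑ y', ∑ z', jointProt pXY pZ sim m' x y' z'
        = ∑ y', pXY x y' := by
      simp [hS]
    rw [hD, hS m, sum_joint]
    by_cases hm : m = msgClass sim x
    · rw [if_pos hm, jointProt, if_pos hm, div_self (ne_of_gt h),
        div_self (ne_of_gt (hXsupp x))]
    · rw [if_neg hm, jointProt, if_neg hm, zero_div, zero_div]
  · -- Markov chain M − (Y,Z) − X
    intro m x y z h
    rw [sum_joint] at h
    have hx : 0 < pXY x y := (hXYnn x y).lt_of_ne' (left_ne_zero_of_mul (ne_of_gt h))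
    have hz : 0 < pZ z x y := (hZnn z x y).lt_of_ne' (right_ne_zero_of_mul (ne_of_gt h))
    have key : ∀ x', pXY x' y * pZ z x' y ≠ 0 → msgClass sim x = msgClass sim x' := by
      intro x' ht
      have hx' : 0 < pXY x' y := (hXYnn x' y).lt_of_ne' (left_ne_zero_of_mul ht)
      have hz' : 0 < pZ z x' y := (hZnn z x' y).lt_of_ne' (right_ne_zero_of_mul ht)
      exact msgClass_eq hsymm ((hsim x x').mpr ⟨y, z, hx, hx', hz, hz'⟩)
    have hD : ∑ m' : Finset X, ∑ x', jointProt pXY pZ sim m' x' y z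
        = ∑ x', pXY x' y * pZ z x' y := by
      rw [Finset.sum_comm]
      exact Finset.sum_congr rfl fun x' _ => sum_joint pXY pZ sim x' y z
    rw [hD, sum_joint]
    by_cases hm : m = msgClass sim x
    · have hN : ∑ x', jointProt pXY pZ sim m x' y z = ∑ x', pXY x' y * pZ z x' y := by
        refine Finset.sum_congr rfl fun x' _ => ?_
        rw [jointProt]
        by_cases ht : pXY x' y * pZ z x' y = 0
        · simp [ht]
        · rw [if_pos (hm.trans (key x' ht))]
      rw [hN, jointProt, if_pos hm, div_self (ne_of_gt h)]
      have hDpos : 0 < ∑ x', pXY x' y * pZ z x' y :=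
        Finset.sum_pos' (fun x' _ => mul_nonneg (hXYnn x' y) (hZnn z x' y))
          ⟨x, Finset.mem_univ x, h⟩
      rw [div_self (ne_of_gt hDpos)]
    · have hN : ∑ x', jointProt pXY pZ sim m x' y z = 0 := by
        refine Finset.sum_eq_zero fun x' _ => ?_
        rw [jointProt]
        by_cases ht : pXY x' y * pZ z x' y = 0
        · simp [ht]
        · rw [if_neg]
          intro hmm
          exact hm (hmm.trans (key x' ht).symm)
      rw [hN, jointProt, if_neg hm, zero_div, zero_div]
end

section
/- Let Π be a perfectly secure protocol for (p_{XY}, p_{Z|XY}) (inducing joint distribution p(x,y,m,z) satisfying correctness and the three Markov chains M − X − (Y,Z), M − (Y,Z) − X, Z − (M,Y) − X), and let ℳ_i be the set of transcripts m with p(m|x) > 0 for some x in the equivalence class 𝒳_i. If for distinct classes 𝒳_i, 𝒳_j there exist x ∈ 𝒳_i, x' ∈ 𝒳_j, and y ∈ 𝒴 with p_{XY}(x,y) > 0 and p_{XY}(x',y) > 0, then ℳ_i ∩ ℳ_j = ∅. -/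
open Finset

/-- If `x` and `x'` lie in distinct equivalence classes of `≡` but share a `y`
with `p(x,y) > 0` and `p(x',y) > 0`, then in any perfectly secure protocol no
transcript `m` has both `p(m|x) > 0` and `p(m|x') > 0`, i.e. `ℳ_i ∩ ℳ_j = ∅`. -/
theorem stmt_5 {M X Y Z : Type} [Fintype M] [Fintype X] [Fintype Y] [Fintype Z]
    (p : M → X → Y → Z → ℝ)
    (hnn : ∀ m x y z, 0 ≤ p m x y z)
    (hsum : ∑ m, ∑ x, ∑ y, ∑ z, p m x y z = 1)
    (pX : X → ℝ) (hpX : ∀ x, pX x = ∑ m, ∑ y, ∑ z, p m x y z)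
    (pMX : M → X → ℝ) (hpMX : ∀ m x, pMX m x = ∑ y, ∑ z, p m x y z)
    (pXY : X → Y → ℝ) (hpXY : ∀ x y, pXY x y = ∑ m, ∑ z, p m x y z)
    (pXYZ : X → Y → Z → ℝ) (hpXYZ : ∀ x y z, pXYZ x y z = ∑ m, p m x y z)
    (pYZ : Y → Z → ℝ) (hpYZ : ∀ y z, pYZ y z = ∑ m, ∑ x, p m x y z)
    (pMYZ : M → Y → Z → ℝ) (hpMYZ : ∀ m y z, pMYZ m y z = ∑ x, p m x y z)
    (pMY : M → Y → ℝ) (hpMY : ∀ m y, pMY m y = ∑ x, ∑ z, p m x y z)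
    (pMXY : M → X → Y → ℝ) (hpMXY : ∀ m x y, pMXY m x y = ∑ z, p m x y z)
    -- Markov chain M − X − (Y,Z)
    (hMC1 : ∀ m x y z, pXYZ x y z > 0 →
      p m x y z / pXYZ x y z = pMX m x / pX x)
    -- Markov chain M − (Y,Z) − X
    (hMC2 : ∀ m x y z, pXYZ x y z > 0 →
      p m x y z / pXYZ x y z = pMYZ m y z / pYZ y z)
    -- Markov chain Z − (M,Y) − X
    (hMC3 : ∀ m x y z, pMXY m x y > 0 →
      p m x y z / pMXY m x y = pMYZ m y z / pMY m y)
    -- the relation ∼ (on the conditional distribution induced by the protocol)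
    (sim : X → X → Prop)
    (hsim : ∀ x x', sim x x' ↔ ∃ (y : Y) (z : Z),
      pXY x y > 0 ∧ pXY x' y > 0 ∧
      pXYZ x y z / pXY x y > 0 ∧ pXYZ x' y z / pXY x' y > 0)
    (x x' : X)
    -- x and x' lie in distinct equivalence classes
    (hneq : ¬ Relation.ReflTransGen sim x x')
    (y : Y) (hx : pXY x y > 0) (hx' : pXY x' y > 0) :
    ∀ m, ¬ (pMX m x / pX x > 0 ∧ pMX m x' / pX x' > 0) := by
  intro m ⟨h1, h2⟩
  -- basic nonnegativity / domination facts
  have hple : ∀ (a : X) (z : Z), p m a y z ≤ pXYZ a y z := by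
    intro a z
    rw [hpXYZ]
    exact Finset.single_le_sum (f := fun m => p m a y z) (fun i _ => hnn i a y z) (mem_univ m)
  -- key: pMXY m a y = pXY a y * (pMX m a / pX a)
  have key : ∀ (a : X), pMXY m a y = pXY a y * (pMX m a / pX a) := by
    intro a
    have hz : ∀ z, p m a y z = pXYZ a y z * (pMX m a / pX a) := by
      intro z
      have hnnZ : 0 ≤ pXYZ a y z := by
        rw [hpXYZ]; exact Finset.sum_nonneg fun i _ => hnn i a y z
      rcases lt_or_eq_of_le hnnZ with hpos | h0
      · have h := hMC1 m a y z hpos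
        rw [div_eq_iff hpos.ne'] at h
        rw [h]; ring
      · have : p m a y z = 0 := le_antisymm (h0 ▸ hple a z) (hnn m a y z)
        rw [this, ← h0, zero_mul]
    rw [hpMXY]
    calc ∑ z, p m a y z = ∑ z, pXYZ a y z * (pMX m a / pX a) := by
          exact Finset.sum_congr rfl fun z _ => hz z
      _ = (∑ z, pXYZ a y z) * (pMX m a / pX a) := by rw [Finset.sum_mul]
      _ = pXY a y * (pMX m a / pX a) := by
          congr 1
          rw [hpXY]
          simp only [hpXYZ]
          exact Finset.sum_comm
  have hMXY : pMXY m x y > 0 := by rw [key x]; exact mul_pos hx h1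
  have hMXY' : pMXY m x' y > 0 := by rw [key x']; exact mul_pos hx' h2
  -- find z with p m x y z > 0
  obtain ⟨z, hz⟩ : ∃ z, 0 < p m x y z := by
    by_contra hc
    push_neg at hc
    have : pMXY m x y = 0 := by
      rw [hpMXY]
      exact Finset.sum_eq_zero fun z _ => le_antisymm (hc z) (hnn m x y z)
    linarith
  have hXYZ : 0 < pXYZ x y z := lt_of_lt_of_le hz (hple x z)
  have hMYZ : 0 < pMYZ m y z := by
    rw [hpMYZ]
    exact lt_of_lt_of_le hz
      (Finset.single_le_sum (f := fun a => p m a y z) (fun i _ => hnn m i y z) (mem_univ x))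
  have hMY : 0 < pMY m y := by
    have : pMXY m x y ≤ pMY m y := by
      rw [hpMY, hpMXY]
      exact Finset.single_le_sum (f := fun a => ∑ z, p m a y z)
        (fun i _ => Finset.sum_nonneg fun z _ => hnn m i y z) (mem_univ x)
    linarith
  -- use MC3 at x'
  have h3 := hMC3 m x' y z hMXY'
  have hrhs : 0 < pMYZ m y z / pMY m y := div_pos hMYZ hMY
  rw [← h3] at hrhs
  have hp' : 0 < p m x' y z := by
    by_contra hc
    push_neg at hc
    have := div_nonpos_of_nonpos_of_nonneg hc hMXY'.le
    linarith
  have hXYZ' : 0 < pXYZ x' y z := lt_of_lt_of_le hp' (hple x' z)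
  exact hneq (Relation.ReflTransGen.single ((hsim x x').mpr
    ⟨y, z, hx, hx', div_pos hXYZ hx, div_pos hXYZ' hx'⟩))
end

section
/- Let G = (𝒳, E) be the characteristic graph of (p_{XY}, p_{Z|XY}) and suppose U, X, Y, Z are finite jointly distributed random variables with (X,Y) ∼ p_{XY}, Z | (X,Y) ∼ p_{Z|XY}, and satisfying the Markov chains U − X − (Y,Z) and Z − (U,Y) − X. Define W = w(U) where w(u) := {x : p_{U,X}(u,x) > 0}. Then: (1) W − X − Y is a Markov chain; (2) X ∈ W almost surely; and (3) W is almost surely an independent set of G. -/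
open Finset

/-- Edge of the characteristic graph `G` of `(p_{XY}, p_{Z|XY})`. -/
def CharEdge {X Y Z : Type} (pXY : X → Y → ℝ) (pZ : Z → X → Y → ℝ)
    (x x' : X) : Prop :=
  x ≠ x' ∧ ∃ (y : Y) (z : Z),
    pXY x y > 0 ∧ pXY x' y > 0 ∧ pZ z x y ≠ pZ z x' y

/-- For `W = w(U) = {x : p_{U,X}(u,x) > 0}` under the Markov chains
`U − X − (Y,Z)` and `Z − (U,Y) − X`: (1) `W − X − Y` is a Markov chain,
(2) `X ∈ W` almost surely, (3) `W` is almost surely an independent set of `G`. -/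
theorem stmt_13 {U X Y Z : Type} [Fintype U] [Fintype X] [Fintype Y] [Fintype Z]
    [DecidableEq X]
    (pXY : X → Y → ℝ) (pZ : Z → X → Y → ℝ)
    (hXYnn : ∀ x y, 0 ≤ pXY x y) (hXYsum : ∑ x, ∑ y, pXY x y = 1)
    (hZnn : ∀ z x y, 0 ≤ pZ z x y) (hZsum : ∀ x y, ∑ z, pZ z x y = 1)
    (p : U → X → Y → Z → ℝ)
    (hnn : ∀ u x y z, 0 ≤ p u x y z)
    -- (X,Y) ∼ p_{XY} and Z | (X,Y) ∼ p_{Z|XY}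
    (hmarg : ∀ x y z, ∑ u, p u x y z = pXY x y * pZ z x y)
    -- Markov chain U − X − (Y,Z)
    (hMC1 : ∀ u x y z, pXY x y * pZ z x y > 0 →
      p u x y z / (pXY x y * pZ z x y)
        = (∑ y', ∑ z', p u x y' z') / (∑ u', ∑ y', ∑ z', p u' x y' z'))
    -- Markov chain Z − (U,Y) − X
    (hMC2 : ∀ u x y z, (∑ z', p u x y z') > 0 →
      p u x y z / (∑ z', p u x y z')
        = (∑ x', p u x' y z) / (∑ x', ∑ z', p u x' y z'))
    -- W = w(U) where w(u) = {x : p_{U,X}(u,x) > 0}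
    (w : U → Finset X)
    (hw : ∀ u x, x ∈ w u ↔ (∑ y, ∑ z, p u x y z) > 0) :
    -- (1) Markov chain W − X − Y
    (∀ (s : Finset X) (x : X) (y : Y), (∑ u, ∑ z, p u x y z) > 0 →
      (∑ u, if w u = s then ∑ z, p u x y z else 0) / (∑ u, ∑ z, p u x y z)
        = (∑ u, if w u = s then ∑ y', ∑ z, p u x y' z else 0)
            / (∑ u, ∑ y', ∑ z, p u x y' z)) ∧
    -- (2) X ∈ W almost surely
    (∀ u x, (∑ y, ∑ z, p u x y z) > 0 → x ∈ w u) ∧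
    -- (3) W is almost surely an independent set of G
    (∀ u x x', x ∈ w u → x' ∈ w u → ¬ CharEdge pXY pZ x x') := by
  -- key identity: p u x y z = pXY x y * pZ z x y * (p(u,x)/p(x))
  have key : ∀ u x y z, p u x y z = pXY x y * pZ z x y *
      ((∑ y', ∑ z', p u x y' z') / (∑ u', ∑ y', ∑ z', p u' x y' z')) := by
    intro u x y z
    by_cases h : 0 < pXY x y * pZ z x y
    · have h1 := hMC1 u x y z h
      rw [div_eq_iff (ne_of_gt h)] at h1
      rw [h1]; ring
    · have hb : pXY x y * pZ z x y = 0 :=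
        le_antisymm (not_lt.mp h) (mul_nonneg (hXYnn x y) (hZnn z x y))
      have hsum : ∑ u', p u' x y z = 0 := by rw [hmarg, hb]
      have hz : p u x y z = 0 :=
        (Finset.sum_eq_zero_iff_of_nonneg (fun u' _ => hnn u' x y z)).mp hsum u
          (Finset.mem_univ u)
      rw [hz, hb, zero_mul]
  -- ∑_z p(u,x,y,z) = pXY x y * (p(u,x)/p(x))
  have sumz : ∀ u x y, ∑ z, p u x y z = pXY x y *
      ((∑ y', ∑ z', p u x y' z') / (∑ u', ∑ y', ∑ z', p u' x y' z')) := by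
    intro u x y
    have h1 : ∀ z, p u x y z = pZ z x y *
        (pXY x y * ((∑ y', ∑ z', p u x y' z') / (∑ u', ∑ y', ∑ z', p u' x y' z'))) :=
      fun z => by rw [key u x y z]; ring
    rw [Finset.sum_congr rfl fun z _ => h1 z, ← Finset.sum_mul, hZsum, one_mul]
  -- marginal: ∑_u ∑_z p = pXY x y
  have hD : ∀ x y, (∑ u, ∑ z, p u x y z) = pXY x y := by
    intro x y
    rw [Finset.sum_comm]
    simp only [hmarg]
    rw [← Finset.mul_sum, hZsum, mul_one]
  -- p(x) = ∑_y pXY x y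
  have hpXeq : ∀ x, (∑ u', ∑ y', ∑ z', p u' x y' z') = ∑ y', pXY x y' := by
    intro x
    rw [Finset.sum_comm]
    exact Finset.sum_congr rfl fun y' _ => hD x y'
  refine ⟨?_, ?_, ?_⟩
  · -- (1)
    intro s x y hpos
    have hpXY : 0 < pXY x y := by rw [← hD x y]; exact hpos
    have hpX : 0 < ∑ u', ∑ y', ∑ z', p u' x y' z' := by
      rw [hpXeq x]
      calc (0:ℝ) < pXY x y := hpXY
        _ ≤ ∑ y', pXY x y' :=
          Finset.single_le_sum (fun y' _ => hXYnn x y') (Finset.mem_univ y)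
    have hnum : ∑ u, (if w u = s then ∑ z, p u x y z else 0)
        = pXY x y / (∑ u', ∑ y', ∑ z', p u' x y' z') *
          ∑ u, (if w u = s then ∑ y', ∑ z, p u x y' z else 0) := by
      rw [Finset.mul_sum]
      refine Finset.sum_congr rfl fun u _ => ?_
      by_cases h : w u = s
      · simp only [h, if_true]
        rw [sumz u x y]; ring
      · simp [h]
    rw [hnum, hD x y]
    field_simp
  · -- (2)
    intro u x h
    exact (hw u x).mpr h
  · -- (3)
    intro u x x' hx hx' hedge
    obtain ⟨hne, y, z, hxy, hx'y, hzne⟩ := hedge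
    have cond : ∀ a : X, a ∈ w u → 0 < pXY a y →
        pZ z a y = (∑ x'', p u x'' y z) / (∑ x'', ∑ z', p u x'' y z') := by
      intro a ha hay
      have hpua : 0 < ∑ y', ∑ z', p u a y' z' := (hw u a).mp ha
      have hpXa : 0 < ∑ u', ∑ y', ∑ z', p u' a y' z' := by
        calc (0:ℝ) < ∑ y', ∑ z', p u a y' z' := hpua
          _ ≤ ∑ u', ∑ y', ∑ z', p u' a y' z' :=
            Finset.single_le_sum
              (fun u' _ => Finset.sum_nonneg fun y' _ =>
                Finset.sum_nonneg fun z' _ => hnn u' a y' z')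
              (Finset.mem_univ u)
      have hr : 0 < (∑ y', ∑ z', p u a y' z') / (∑ u', ∑ y', ∑ z', p u' a y' z') :=
        div_pos hpua hpXa
      have hden : 0 < ∑ z', p u a y z' := by
        rw [sumz u a y]; exact mul_pos hay hr
      have h2 := hMC2 u a y z hden
      rw [key u a y z, sumz u a y] at h2
      have hLHS : pXY a y * pZ z a y *
            ((∑ y', ∑ z', p u a y' z') / (∑ u', ∑ y', ∑ z', p u' a y' z')) /
          (pXY a y * ((∑ y', ∑ z', p u a y' z') / (∑ u', ∑ y', ∑ z', p u' a y' z')))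
          = pZ z a y := by
        rw [mul_comm (pXY a y) (pZ z a y), mul_assoc, mul_div_assoc,
          div_self (ne_of_gt (mul_pos hay hr)), mul_one]
      rw [← h2]
      exact hLHS.symm
    have e1 := cond x hx hxy
    have e2 := cond x' hx' hx'y
    exact hzne (e1.trans e2.symm)
end

section
/- The minimum of I(U; X | Y) over conditional distributions p_{U|X} satisfying the Markov chains U − X − (Y,Z) and Z − (U,Y) − X equals the conditional graph entropy H_G(X|Y), i.e., the minimum of I(W; X | Y) over conditional distributions p_{W|X} with W − X − Y and X ∈ W ∈ Γ(G) (W supported on independent sets of G containing X). -/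
open Finset

section AuxLemmas

private lemma mul_pos_split {a b : ℝ} (ha : 0 ≤ a) (hb : 0 ≤ b) (h : 0 < a * b) :
    0 < a ∧ 0 < b := by
  constructor
  · rcases lt_or_eq_of_le ha with h' | h'
    · exact h'
    · exfalso; rw [← h', zero_mul] at h; linarith
  · rcases lt_or_eq_of_le hb with h' | h'
    · exact h'
    · exfalso; rw [← h', mul_zero] at h; linarith

private lemma sum_rot2 {α X Y : Type} [Fintype α] [Fintype X] [Fintype Y] (F : α → X → Y → ℝ) :
    ∑ a, ∑ x, ∑ y, F a x y = ∑ y, ∑ a, ∑ x, F a x y := by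
  rw [show (∑ a, ∑ x, ∑ y, F a x y) = ∑ a, ∑ y, ∑ x, F a x y from
    Finset.sum_congr rfl fun a _ => Finset.sum_comm, Finset.sum_comm]

private lemma logsum {ι : Type*} (s : Finset ι) (a b : ι → ℝ)
    (ha : ∀ i ∈ s, 0 ≤ a i) (hb : ∀ i ∈ s, 0 ≤ b i)
    (hab : ∀ i ∈ s, 0 < a i → 0 < b i) :
    (∑ i ∈ s, a i) * Real.log ((∑ i ∈ s, a i) / (∑ i ∈ s, b i)) ≤
      ∑ i ∈ s, a i * Real.log (a i / b i) := by
  set A := ∑ i ∈ s, a i with hA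
  set B := ∑ i ∈ s, b i with hB
  rcases eq_or_lt_of_le (Finset.sum_nonneg ha) with h0 | hApos
  · rw [← hA] at h0
    have hz : ∀ i ∈ s, a i = 0 := by
      intro i hi
      exact (Finset.sum_eq_zero_iff_of_nonneg ha).1 h0.symm i hi
    rw [← h0]
    simp only [zero_mul]
    apply Finset.sum_nonneg
    intro i hi
    rw [hz i hi]
    simp
  · rw [← hA] at hApos
    have hBpos : 0 < B := by
      obtain ⟨i, hi, hai⟩ : ∃ i ∈ s, 0 < a i := by
        by_contra hc
        push_neg at hc
        have : A ≤ 0 := Finset.sum_nonpos fun i hi => hc i hi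
        linarith
      calc (0:ℝ) < b i := hab i hi hai
        _ ≤ B := Finset.single_le_sum hb hi
    have key : ∀ i ∈ s, a i * Real.log (A / B) + (a i - b i * (A / B)) ≤
        a i * Real.log (a i / b i) := by
      intro i hi
      rcases eq_or_lt_of_le (ha i hi) with h0 | hapos
      · rw [← h0]
        simp only [zero_mul, zero_add, zero_sub, zero_mul]
        have : 0 ≤ b i * (A / B) := mul_nonneg (hb i hi) (le_of_lt (div_pos hApos hBpos))
        linarith
      · have hbpos := hab i hi hapos
        set t := (a i * B) / (b i * A) with ht
        have htpos : 0 < t := div_pos (mul_pos hapos hBpos) (mul_pos hbpos hApos)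
        have h1 : Real.log (a i / b i) - Real.log (A / B) = Real.log t := by
          rw [ht, Real.log_div (ne_of_gt hapos) (ne_of_gt hbpos),
            Real.log_div (ne_of_gt hApos) (ne_of_gt hBpos),
            Real.log_div (ne_of_gt (mul_pos hapos hBpos)) (ne_of_gt (mul_pos hbpos hApos)),
            Real.log_mul (ne_of_gt hapos) (ne_of_gt hBpos),
            Real.log_mul (ne_of_gt hbpos) (ne_of_gt hApos)]
          ring
        have h2 : 1 - t⁻¹ ≤ Real.log t := Real.one_sub_inv_le_log_of_pos htpos
        have h3 : a i * t⁻¹ = b i * (A / B) := by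
          rw [ht]
          field_simp
        have h4 : a i * (1 - t⁻¹) ≤ a i * Real.log t :=
          mul_le_mul_of_nonneg_left h2 (le_of_lt hapos)
        have h5 : a i * (1 - t⁻¹) = a i - b i * (A / B) := by rw [mul_sub, mul_one, h3]
        nlinarith [h4, h5, h1]
    calc A * Real.log (A / B)
        = ∑ i ∈ s, (a i * Real.log (A / B) + (a i - b i * (A / B))) := by
          rw [Finset.sum_add_distrib, Finset.sum_sub_distrib, ← Finset.sum_mul,
            ← Finset.sum_mul, ← hA, ← hB]
          have : B * (A / B) = A := by field_simp
          rw [this]; ring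
      _ ≤ ∑ i ∈ s, a i * Real.log (a i / b i) := Finset.sum_le_sum key

private lemma Innln {U X Y : Type} [Fintype U] [Fintype X] [Fintype Y]
    (pXY : X → Y → ℝ) (q : U → X → ℝ)
    (hXYnn : ∀ x y, 0 ≤ pXY x y) (hq : ∀ u x, 0 ≤ q u x)
    (hqs : ∀ x, ∑ u, q u x = 1) (y : Y) :
    0 ≤ ∑ u, ∑ x, (q u x * pXY x y) * Real.log
      ((q u x * pXY x y) * (∑ x', pXY x' y) / ((∑ x', q u x' * pXY x' y) * pXY x y)) := by
  set pY := ∑ x', pXY x' y with hpY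
  rcases eq_or_lt_of_le (Finset.sum_nonneg fun x _ => hXYnn x y) with h0 | hpos
  · rw [← hpY] at h0
    have hz : ∀ x, pXY x y = 0 := fun x =>
      (Finset.sum_eq_zero_iff_of_nonneg (fun x _ => hXYnn x y)).1 h0.symm x (Finset.mem_univ x)
    apply Finset.sum_nonneg; intro u _
    apply Finset.sum_nonneg; intro x _
    rw [hz x]
    simp
  · rw [← hpY] at hpos
    set a : U × X → ℝ := fun p => q p.1 p.2 * pXY p.2 y with hadef
    set b : U × X → ℝ := fun p => (∑ x', q p.1 x' * pXY x' y) * pXY p.2 y / pY with hbdef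
    have hterm : ∀ u x, (q u x * pXY x y) * Real.log
        ((q u x * pXY x y) * pY / ((∑ x', q u x' * pXY x' y) * pXY x y))
        = a (u, x) * Real.log (a (u, x) / b (u, x)) := by
      intro u x
      rw [hadef, hbdef]
      simp only
      rw [div_div_eq_mul_div]
    have hA : ∑ p : U × X, a p = pY := by
      rw [Fintype.sum_prod_type, Finset.sum_comm, hpY]
      apply Finset.sum_congr rfl
      intro x _
      simp only [hadef]
      rw [← Finset.sum_mul, hqs, one_mul]
    have hc : ∀ u, ∑ x, b (u, x) = ∑ x', q u x' * pXY x' y := by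
      intro u
      rw [hbdef]
      simp only
      rw [← Finset.sum_div, ← Finset.mul_sum, ← hpY]
      field_simp
    have hB : ∑ p : U × X, b p = pY := by
      rw [Fintype.sum_prod_type]
      simp only [hc]
      rw [Finset.sum_comm, hpY]
      apply Finset.sum_congr rfl
      intro x _
      rw [← Finset.sum_mul, hqs, one_mul]
    have ha : ∀ p ∈ (Finset.univ : Finset (U × X)), 0 ≤ a p := by
      intro p _
      exact mul_nonneg (hq _ _) (hXYnn _ _)
    have hb : ∀ p ∈ (Finset.univ : Finset (U × X)), 0 ≤ b p := by
      intro p _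
      apply div_nonneg _ (le_of_lt hpos)
      exact mul_nonneg (Finset.sum_nonneg fun x' _ => mul_nonneg (hq _ _) (hXYnn _ _)) (hXYnn _ _)
    have hab : ∀ p ∈ (Finset.univ : Finset (U × X)), 0 < a p → 0 < b p := by
      intro p _ hap
      obtain ⟨hqp, hpxy⟩ := mul_pos_split (hq p.1 p.2) (hXYnn p.2 y) hap
      have hcp : 0 < ∑ x', q p.1 x' * pXY x' y :=
        lt_of_lt_of_le (mul_pos hqp hpxy)
          (Finset.single_le_sum (f := fun x' => q p.1 x' * pXY x' y)
            (fun x' _ => mul_nonneg (hq _ _) (hXYnn _ _)) (Finset.mem_univ p.2))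
      exact div_pos (mul_pos hcp hpxy) hpos
    have hls := logsum Finset.univ a b ha hb hab
    rw [hA, hB, div_self (ne_of_gt hpos), Real.log_one, mul_zero] at hls
    have heq : ∑ u, ∑ x, (q u x * pXY x y) * Real.log
        ((q u x * pXY x y) * pY / ((∑ x', q u x' * pXY x' y) * pXY x y))
        = ∑ p : U × X, a p * Real.log (a p / b p) := by
      rw [Fintype.sum_prod_type]
      exact Finset.sum_congr rfl fun u _ => Finset.sum_congr rfl fun x _ => hterm u x
    rw [heq]
    exact hls

private lemma fiber_xy {U K X Y : Type} [Fintype U] [Fintype K] [Fintype X] [Fintype Y]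
    [DecidableEq K]
    (pXY : X → Y → ℝ) (q : U → X → ℝ) (g : U → K)
    (hXYnn : ∀ x y, 0 ≤ pXY x y) (hq : ∀ u x, 0 ≤ q u x) (x : X) (y : Y) :
    ∑ k, ((∑ u ∈ univ.filter (fun u => g u = k), q u x) * pXY x y) * Real.log
      (((∑ u ∈ univ.filter (fun u => g u = k), q u x) * pXY x y) * (∑ x', pXY x' y) /
        ((∑ x', (∑ u ∈ univ.filter (fun u => g u = k), q u x') * pXY x' y) * pXY x y))
    ≤ ∑ u, (q u x * pXY x y) * Real.log
      ((q u x * pXY x y) * (∑ x', pXY x' y) /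
        ((∑ x', q u x' * pXY x' y) * pXY x y)) := by
  set pY := ∑ x', pXY x' y with hpY
  rcases eq_or_lt_of_le (hXYnn x y) with h0 | hxy
  · simp only [← h0, mul_zero, zero_mul]
    simp
  · have hpos : 0 < pY := lt_of_lt_of_le hxy
      (Finset.single_le_sum (f := fun x' => pXY x' y) (fun x' _ => hXYnn x' y) (Finset.mem_univ x))
    set c : U → ℝ := fun u => ∑ x', q u x' * pXY x' y with hcdef
    set a : U → ℝ := fun u => q u x * pXY x y with hadef
    set b : U → ℝ := fun u => c u * pXY x y / pY with hbdef
    have ha : ∀ u ∈ (univ : Finset U), 0 ≤ a u := fun u _ => mul_nonneg (hq _ _) (hXYnn _ _)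
    have hcnn : ∀ u, 0 ≤ c u :=
      fun u => Finset.sum_nonneg fun x' _ => mul_nonneg (hq _ _) (hXYnn _ _)
    have hb : ∀ u ∈ (univ : Finset U), 0 ≤ b u :=
      fun u _ => div_nonneg (mul_nonneg (hcnn u) (hXYnn _ _)) (le_of_lt hpos)
    have hab : ∀ u ∈ (univ : Finset U), 0 < a u → 0 < b u := by
      intro u _ hau
      have hqu : 0 < q u x := (mul_pos_split (hq u x) (hXYnn x y) hau).1
      have hcu : 0 < c u :=
        lt_of_lt_of_le (mul_pos hqu hxy)
          (Finset.single_le_sum (f := fun x' => q u x' * pXY x' y)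
            (fun x' _ => mul_nonneg (hq _ _) (hXYnn _ _)) (Finset.mem_univ x))
      exact div_pos (mul_pos hcu hxy) hpos
    have key : ∀ k, ((∑ u ∈ univ.filter (fun u => g u = k), q u x) * pXY x y) * Real.log
        (((∑ u ∈ univ.filter (fun u => g u = k), q u x) * pXY x y) * pY /
          ((∑ x', (∑ u ∈ univ.filter (fun u => g u = k), q u x') * pXY x' y) * pXY x y))
        ≤ ∑ u ∈ univ.filter (fun u => g u = k), a u * Real.log (a u / b u) := by
      intro k
      have hsa : ∑ u ∈ univ.filter (fun u => g u = k), a u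
          = (∑ u ∈ univ.filter (fun u => g u = k), q u x) * pXY x y := by
        rw [Finset.sum_mul]
      have hsc : ∑ u ∈ univ.filter (fun u => g u = k), c u
          = ∑ x', (∑ u ∈ univ.filter (fun u => g u = k), q u x') * pXY x' y := by
        simp only [hcdef]
        rw [Finset.sum_comm]
        exact Finset.sum_congr rfl fun x' _ => by rw [Finset.sum_mul]
      have hsb : ∑ u ∈ univ.filter (fun u => g u = k), b u
          = (∑ x', (∑ u ∈ univ.filter (fun u => g u = k), q u x') * pXY x' y) * pXY x y / pY := by
        simp only [hbdef]
        rw [← Finset.sum_div, ← Finset.sum_mul, hsc]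
      have hls := logsum (univ.filter (fun u => g u = k)) a b
        (fun u hu => ha u (Finset.mem_univ u)) (fun u hu => hb u (Finset.mem_univ u))
        (fun u hu => hab u (Finset.mem_univ u))
      rw [hsa, hsb, div_div_eq_mul_div] at hls
      exact hls
    calc (∑ k, ((∑ u ∈ univ.filter (fun u => g u = k), q u x) * pXY x y) * Real.log
        (((∑ u ∈ univ.filter (fun u => g u = k), q u x) * pXY x y) * pY /
          ((∑ x', (∑ u ∈ univ.filter (fun u => g u = k), q u x') * pXY x' y) * pXY x y)))
        ≤ ∑ k, ∑ u ∈ univ.filter (fun u => g u = k), a u * Real.log (a u / b u) :=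
          Finset.sum_le_sum fun k _ => key k
      _ = ∑ u, a u * Real.log (a u / b u) :=
          Finset.sum_fiberwise_of_maps_to (fun u _ => Finset.mem_univ (g u)) _
      _ = ∑ u, (q u x * pXY x y) * Real.log
          ((q u x * pXY x y) * pY / ((∑ x', q u x' * pXY x' y) * pXY x y)) := by
        apply Finset.sum_congr rfl
        intro u _
        rw [hadef, hbdef, hcdef]
        simp only
        rw [div_div_eq_mul_div]


private lemma stepB {U X Y : Type} [Fintype U] [Fintype X] [Fintype Y]
    (pXY : X → Y → ℝ) (q : U → X → ℝ)
    (hXYnn : ∀ x y, 0 ≤ pXY x y) (hq : ∀ u x, 0 ≤ q u x)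
    (hqs : ∀ x, ∑ u, q u x = 1) :
    0 ≤ ∑ u, ∑ x, ∑ y, (q u x * pXY x y) * Real.log
      ((q u x * pXY x y) * (∑ x', pXY x' y) / ((∑ x', q u x' * pXY x' y) * pXY x y)) := by
  rw [sum_rot2 (fun u x y => (q u x * pXY x y) * Real.log
      ((q u x * pXY x y) * (∑ x', pXY x' y) / ((∑ x', q u x' * pXY x' y) * pXY x y)))]
  apply Finset.sum_nonneg
  intro y _
  exact Innln pXY q hXYnn hq hqs y

private lemma stepD {U X Y Z : Type} [Fintype U] [Fintype X] [Fintype Y] [Fintype Z]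
    [DecidableEq X]
    (pXY : X → Y → ℝ) (pZ : Z → X → Y → ℝ) (q : U → X → ℝ)
    (hXYnn : ∀ x y, 0 ≤ pXY x y) (hq : ∀ u x, 0 ≤ q u x)
    (hqs : ∀ x, ∑ u, q u x = 1)
    (hmarkov : ∀ (u : U) (x : X) (y : Y) (z : Z), q u x * pXY x y > 0 →
        pZ z x y = (∑ x', q u x' * pXY x' y * pZ z x' y) / (∑ x', q u x' * pXY x' y)) :
    ∃ Q : Finset X → X → ℝ,
      (∀ w x, 0 ≤ Q w x) ∧
      (∀ x, ∑ w, Q w x = 1) ∧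
      (∀ w x, Q w x > 0 →
        x ∈ w ∧ ∀ a ∈ w, ∀ b ∈ w, ¬ CharEdge pXY pZ a b) ∧
      (∑ w, ∑ x, ∑ y, (Q w x * pXY x y) * Real.log
          ((Q w x * pXY x y) * (∑ x', pXY x' y) / ((∑ x', Q w x' * pXY x' y) * pXY x y)))
        ≤ ∑ u, ∑ x, ∑ y, (q u x * pXY x y) * Real.log
          ((q u x * pXY x y) * (∑ x', pXY x' y) / ((∑ x', q u x' * pXY x' y) * pXY x y)) := by
  set g : U → Finset X := fun u => univ.filter (fun x => 0 < q u x) with hg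
  refine ⟨fun w x => ∑ u ∈ univ.filter (fun u => g u = w), q u x, ?_, ?_, ?_, ?_⟩
  · intro w x
    exact Finset.sum_nonneg fun u _ => hq u x
  · intro x
    show ∑ w : Finset X, ∑ u ∈ univ.filter (fun u => g u = w), q u x = 1
    rw [Finset.sum_fiberwise_of_maps_to (fun u _ => Finset.mem_univ (g u))]
    exact hqs x
  · intro w x hpos
    have hpos' : 0 < ∑ u ∈ univ.filter (fun u => g u = w), q u x := hpos
    obtain ⟨u, hu, hqu⟩ : ∃ u ∈ univ.filter (fun u => g u = w), 0 < q u x := by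
      by_contra hc
      push_neg at hc
      have : ∑ u ∈ univ.filter (fun u => g u = w), q u x ≤ 0 :=
        Finset.sum_nonpos fun u hu => hc u hu
      linarith
    have hgu : g u = w := (Finset.mem_filter.1 hu).2
    have hmem : ∀ x'' : X, 0 < q u x'' → x'' ∈ w := by
      intro x'' h
      rw [← hgu, hg]
      simp only [Finset.mem_filter, Finset.mem_univ, true_and]
      exact h
    refine ⟨hmem x hqu, ?_⟩
    intro a ha b hb hedge
    obtain ⟨hne, y, z, hpa, hpb, hzne⟩ := hedge
    have hqa : 0 < q u a := by
      rw [← hgu, hg] at ha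
      simpa using ha
    have hqb : 0 < q u b := by
      rw [← hgu, hg] at hb
      simpa using hb
    have e1 := hmarkov u a y z (mul_pos hqa hpa)
    have e2 := hmarkov u b y z (mul_pos hqb hpb)
    exact hzne (e1.trans e2.symm)
  · show (∑ w : Finset X, ∑ x, ∑ y,
        ((∑ u ∈ univ.filter (fun u => g u = w), q u x) * pXY x y) * Real.log
          (((∑ u ∈ univ.filter (fun u => g u = w), q u x) * pXY x y) * (∑ x', pXY x' y) /
            ((∑ x', (∑ u ∈ univ.filter (fun u => g u = w), q u x') * pXY x' y) * pXY x y)))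
      ≤ _
    rw [sum_rot2 (fun w x y => ((∑ u ∈ univ.filter (fun u => g u = w), q u x) * pXY x y) * Real.log
          (((∑ u ∈ univ.filter (fun u => g u = w), q u x) * pXY x y) * (∑ x', pXY x' y) /
            ((∑ x', (∑ u ∈ univ.filter (fun u => g u = w), q u x') * pXY x' y) * pXY x y))),
      sum_rot2 (fun u x y => (q u x * pXY x y) * Real.log
          ((q u x * pXY x y) * (∑ x', pXY x' y) / ((∑ x', q u x' * pXY x' y) * pXY x y)))]
    apply Finset.sum_le_sum
    intro y _
    have lhs_eq : ∑ w : Finset X, ∑ x,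
        ((∑ u ∈ univ.filter (fun u => g u = w), q u x) * pXY x y) * Real.log
          (((∑ u ∈ univ.filter (fun u => g u = w), q u x) * pXY x y) * (∑ x', pXY x' y) /
            ((∑ x', (∑ u ∈ univ.filter (fun u => g u = w), q u x') * pXY x' y) * pXY x y))
        = ∑ x, ∑ w : Finset X,
        ((∑ u ∈ univ.filter (fun u => g u = w), q u x) * pXY x y) * Real.log
          (((∑ u ∈ univ.filter (fun u => g u = w), q u x) * pXY x y) * (∑ x', pXY x' y) /
            ((∑ x', (∑ u ∈ univ.filter (fun u => g u = w), q u x') * pXY x' y) * pXY x y)) :=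
      Finset.sum_comm
    have rhs_eq : ∑ u, ∑ x, (q u x * pXY x y) * Real.log
          ((q u x * pXY x y) * (∑ x', pXY x' y) / ((∑ x', q u x' * pXY x' y) * pXY x y))
        = ∑ x, ∑ u, (q u x * pXY x y) * Real.log
          ((q u x * pXY x y) * (∑ x', pXY x' y) / ((∑ x', q u x' * pXY x' y) * pXY x y)) :=
      Finset.sum_comm
    rw [lhs_eq, rhs_eq]
    apply Finset.sum_le_sum
    intro x _
    exact fiber_xy pXY q g hXYnn hq x y

end AuxLemmas

/-- The minimum of `I(U;X|Y)` over conditional pmfs `p_{U|X}` satisfying the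
Markov chains `U − X − (Y,Z)` (built into the joint `q(u|x) p_{XY}(x,y) p_{Z|XY}(z|x,y)`)
and `Z − (U,Y) − X` equals the conditional graph entropy `H_G(X|Y)`, the minimum
of `I(W;X|Y)` over `p_{W|X}` with `W − X − Y` and `X ∈ W ∈ Γ(G)`. -/
theorem stmt_14 {X Y Z : Type} [Fintype X] [Fintype Y] [Fintype Z] [DecidableEq X]
    (pXY : X → Y → ℝ) (pZ : Z → X → Y → ℝ)
    (hXYnn : ∀ x y, 0 ≤ pXY x y) (hXYsum : ∑ x, ∑ y, pXY x y = 1)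
    (hZnn : ∀ z x y, 0 ≤ pZ z x y) (hZsum : ∀ x y, ∑ z, pZ z x y = 1) :
    sInf {r : ℝ | ∃ (U : Type) (i : Fintype U) (q : U → X → ℝ),
      (∀ u x, 0 ≤ q u x) ∧
      (∀ x, (@Finset.univ U i).sum (fun u => q u x) = 1) ∧
      -- Markov chain Z − (U,Y) − X: p(z|u,x,y) = p(z|u,y)
      (∀ (u : U) (x : X) (y : Y) (z : Z), q u x * pXY x y > 0 →
        pZ z x y = (∑ x', q u x' * pXY x' y * pZ z x' y)
                      / (∑ x', q u x' * pXY x' y)) ∧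
      -- r = I(U;X|Y)
      r = (@Finset.univ U i).sum (fun u => ∑ x, ∑ y,
            (q u x * pXY x y) * Real.log
              ((q u x * pXY x y) * (∑ x', pXY x' y) /
                ((∑ x', q u x' * pXY x' y) * pXY x y)))}
    = sInf {r : ℝ | ∃ q : Finset X → X → ℝ,
      (∀ w x, 0 ≤ q w x) ∧
      (∀ x, ∑ w, q w x = 1) ∧
      -- X ∈ W ∈ Γ(G): W is an independent set of G containing X
      (∀ w x, q w x > 0 →
        x ∈ w ∧ ∀ a ∈ w, ∀ b ∈ w, ¬ CharEdge pXY pZ a b) ∧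
      -- r = I(W;X|Y)
      r = ∑ w, ∑ x, ∑ y,
            (q w x * pXY x y) * Real.log
              ((q w x * pXY x y) * (∑ x', pXY x' y) /
                ((∑ x', q w x' * pXY x' y) * pXY x y))} := by
  set L := {r : ℝ | ∃ (U : Type) (i : Fintype U) (q : U → X → ℝ),
      (∀ u x, 0 ≤ q u x) ∧
      (∀ x, (@Finset.univ U i).sum (fun u => q u x) = 1) ∧
      (∀ (u : U) (x : X) (y : Y) (z : Z), q u x * pXY x y > 0 →
        pZ z x y = (∑ x', q u x' * pXY x' y * pZ z x' y)
                      / (∑ x', q u x' * pXY x' y)) ∧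
      r = (@Finset.univ U i).sum (fun u => ∑ x, ∑ y,
            (q u x * pXY x y) * Real.log
              ((q u x * pXY x y) * (∑ x', pXY x' y) /
                ((∑ x', q u x' * pXY x' y) * pXY x y)))} with hL
  set R := {r : ℝ | ∃ q : Finset X → X → ℝ,
      (∀ w x, 0 ≤ q w x) ∧
      (∀ x, ∑ w, q w x = 1) ∧
      (∀ w x, q w x > 0 →
        x ∈ w ∧ ∀ a ∈ w, ∀ b ∈ w, ¬ CharEdge pXY pZ a b) ∧
      r = ∑ w, ∑ x, ∑ y,
            (q w x * pXY x y) * Real.log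
              ((q w x * pXY x y) * (∑ x', pXY x' y) /
                ((∑ x', q w x' * pXY x' y) * pXY x y))} with hR
  -- R ⊆ L
  have hsub : R ⊆ L := by
    intro r hr
    obtain ⟨q, hq, hqs, hsupp, hrval⟩ := hr
    refine ⟨Finset X, inferInstance, q, hq, hqs, ?_, hrval⟩
    intro w x y z hposxy
    obtain ⟨hqx, hpxy⟩ := mul_pos_split (hq w x) (hXYnn x y) hposxy
    obtain ⟨hxw, hindep⟩ := hsupp w x hqx
    have hnum : ∀ x' : X, q w x' * pXY x' y * pZ z x' y
        = q w x' * pXY x' y * pZ z x y := by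
      intro x'
      rcases eq_or_lt_of_le (mul_nonneg (hq w x') (hXYnn x' y)) with h0 | hp
      · rw [← h0, zero_mul, zero_mul]
      · obtain ⟨hqx', hpxy'⟩ := mul_pos_split (hq w x') (hXYnn x' y) hp
        obtain ⟨hx'w, _⟩ := hsupp w x' hqx'
        by_cases hxe : x = x'
        · rw [hxe]
        · by_contra hne
          have hZne : pZ z x' y ≠ pZ z x y := by
            intro hc
            exact hne (by rw [hc])
          exact hindep x hxw x' hx'w ⟨hxe, y, z, hpxy, hpxy', Ne.symm hZne⟩
    have hDpos : 0 < ∑ x', q w x' * pXY x' y :=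
      lt_of_lt_of_le hposxy
        (Finset.single_le_sum (f := fun x' => q w x' * pXY x' y)
          (fun x' _ => mul_nonneg (hq _ _) (hXYnn _ _)) (Finset.mem_univ x))
    rw [Finset.sum_congr rfl fun x' _ => hnum x', ← Finset.sum_mul,
      mul_comm, mul_div_assoc, div_self (ne_of_gt hDpos), mul_one]
  -- nonnegativity of elements of L
  have hLnn : ∀ r ∈ L, (0:ℝ) ≤ r := by
    intro r hr
    obtain ⟨U, i, q, hq, hqs, _, hrval⟩ := hr
    rw [hrval]
    exact @stepB U X Y i _ _ pXY q hXYnn hq hqs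
  -- R is nonempty
  have hRne : R.Nonempty := by
    have hq0 : ∀ (w : Finset X) (x : X), (0:ℝ) ≤ if w = ({x} : Finset X) then 1 else 0 := by
      intro w x; split <;> norm_num
    have hq0s : ∀ x : X, ∑ w : Finset X, (if w = ({x} : Finset X) then (1:ℝ) else 0) = 1 := by
      intro x; simp
    have hq0supp : ∀ (w : Finset X) (x : X),
        (if w = ({x} : Finset X) then (1:ℝ) else 0) > 0 →
        x ∈ w ∧ ∀ a ∈ w, ∀ b ∈ w, ¬ CharEdge pXY pZ a b := by
      intro w x hpos
      have hw : w = {x} := by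
        by_contra hc
        simp [hc] at hpos
      subst hw
      refine ⟨Finset.mem_singleton_self x, ?_⟩
      intro a ha b hb hedge
      rw [Finset.mem_singleton] at ha hb
      exact hedge.1 (ha.trans hb.symm)
    exact ⟨_, fun w x => if w = {x} then 1 else 0, hq0, hq0s, hq0supp, rfl⟩
  have hLne : L.Nonempty := ⟨hRne.choose, hsub hRne.choose_spec⟩
  have hbddL : BddBelow L := ⟨0, fun r hr => hLnn r hr⟩
  have hbddR : BddBelow R := ⟨0, fun r hr => hLnn r (hsub hr)⟩
  apply le_antisymm
  · exact csInf_le_csInf hbddL hRne hsub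
  · apply le_csInf hLne
    intro r hr
    obtain ⟨U, i, q, hq, hqs, hmarkov, hrval⟩ := hr
    obtain ⟨Q, h1, h2, h3, h4⟩ :=
      @stepD U X Y Z i _ _ _ _ pXY pZ q hXYnn hq hqs hmarkov
    refine le_trans (csInf_le hbddR ⟨Q, h1, h2, h3, rfl⟩) ?_
    rw [hrval]
    exact h4
end

section
/- Let (M, X, Y, Z) be finite jointly distributed random variables with the Markov chains M − X − (Y,Z), M − (Y,Z) − X, and Z − (M,Y) − X, whose (X,Y,Z)-marginal equals p_{XY} · p_{Z|XY} for a securely computable pair, and let X_EQ = f(X) be the equivalence class of X. Then I(M; X_EQ | Y) = H(X_EQ | Y). Consequently the minimum of I(U; X_EQ|Y) over p_{U|X_EQ} with U − X_EQ − (Y,Z) and Z − (U,Y) − X_EQ equals H(X_EQ|Y). -/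
open Finset

noncomputable section

/-- Joint pmf of `(M, X_EQ, Y)` where `X_EQ = f(X)`. -/
def pMEY {M X Y Z E : Type} [Fintype X] [Fintype Z] [DecidableEq E]
    (p : M → X → Y → Z → ℝ) (f : X → E) (m : M) (e : E) (y : Y) : ℝ :=
  ∑ x, ∑ z, if f x = e then p m x y z else 0

/-- `I(M; X_EQ | Y)` for the protocol-induced joint distribution. -/
def IMEgY {M X Y Z E : Type} [Fintype M] [Fintype X] [Fintype Y] [Fintype Z]
    [Fintype E] [DecidableEq E] (p : M → X → Y → Z → ℝ) (f : X → E) : ℝ :=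
  ∑ m, ∑ e, ∑ y,
    pMEY p f m e y * Real.log
      (pMEY p f m e y * (∑ m', ∑ x, ∑ z, p m' x y z) /
        ((∑ x, ∑ z, p m x y z) * (∑ m', pMEY p f m' e y)))

/-- Marginal pmf of `(X_EQ, Y)` computed from `p_{XY}`. -/
def pEYc {X Y E : Type} [Fintype X] [DecidableEq E]
    (pXY : X → Y → ℝ) (f : X → E) (e : E) (y : Y) : ℝ :=
  ∑ x, if f x = e then pXY x y else 0

/-- Collapsed joint pmf of `(X_EQ, Y, Z)`. -/
def pEYZc {X Y Z E : Type} [Fintype X] [DecidableEq E]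
    (pXY : X → Y → ℝ) (pZ : Z → X → Y → ℝ) (f : X → E)
    (e : E) (y : Y) (z : Z) : ℝ :=
  ∑ x, if f x = e then pXY x y * pZ z x y else 0

/-- Conditional entropy `H(X_EQ | Y)`. -/
def HEgY {X Y E : Type} [Fintype X] [Fintype Y] [Fintype E] [DecidableEq E]
    (pXY : X → Y → ℝ) (f : X → E) : ℝ :=
  -∑ e, ∑ y, pEYc pXY f e y * Real.log (pEYc pXY f e y / ∑ x, pXY x y)

/-!
Two inputs `x, x'` with `p(x, y, z), p(x', y, z) > 0` are `∼`-related, so `X_EQ` is determined by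
`(Y, Z)` on the support. The Markov chain `Z − (M, Y) − X` says that the law of `Z` given
`(m, x, y)` does not depend on `x`; hence any two inputs compatible with `(m, y)` share a `z` and
lie in the same class. Thus `X_EQ` is a function of `(M, Y)`, `H(X_EQ | M, Y) = 0` and
`I(M; X_EQ | Y) = H(X_EQ | Y)`. The same argument applies to every feasible `U` of the
minimisation, and `U = X_EQ` is feasible.
-/

section Fibers

variable {α β : Type*} [Fintype α] [DecidableEq β]

lemma exists_of_sum_ite_pos {f : α → β} {g : α → ℝ} {b : β} (hg : ∀ a, 0 ≤ g a)
    (h : 0 < ∑ a, if f a = b then g a else 0) : ∃ a, f a = b ∧ 0 < g a := by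
  rw [← sum_filter] at h
  obtain ⟨a, ha, hpos⟩ := (sum_pos_iff_of_nonneg fun a _ => hg a).1 h
  exact ⟨a, (mem_filter.1 ha).2, hpos⟩

lemma sum_sum_ite_eq_sum [Fintype β] {M : Type*} [AddCommMonoid M] (f : α → β) (g : α → M) :
    ∑ b, ∑ a, (if f a = b then g a else 0) = ∑ a, g a := by
  simp only [← sum_filter]
  exact sum_fiberwise univ f g

end Fibers

lemma pos_of_div_eq_of_div_eq {a b a' b' r : ℝ} (h : a / b = r) (h' : a' / b' = r)
    (ha : 0 < a) (hb : 0 < b) (hb' : 0 < b') : 0 < a' :=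
  (div_pos_iff_of_pos_right hb').1 (h' ▸ h ▸ div_pos ha hb)

lemma csInf_eq_of_forall_eq {s : Set ℝ} {c : ℝ} (hne : s.Nonempty) (h : ∀ r ∈ s, r = c) :
    sInf s = c := by
  rw [hne.subset_singleton_iff.1 h, csInf_singleton]

section CondEntropy

variable {A E Y : Type*} [Fintype A] [Fintype E] [Fintype Y]

/-- `I(A; E | Y)` for the joint weights `w a e y`, whose `(E, Y)`- and `Y`-marginals are supplied
as `g` and `pY`. -/
def condMutualInfo (w : A → E → Y → ℝ) (g : E → Y → ℝ) (pY : Y → ℝ) : ℝ :=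
  ∑ a, ∑ e, ∑ y, w a e y * Real.log (w a e y * pY y / ((∑ e', w a e' y) * g e y))

def condEntropy (g : E → Y → ℝ) (pY : Y → ℝ) : ℝ :=
  -∑ e, ∑ y, g e y * Real.log (g e y / pY y)

theorem condMutualInfo_eq_condEntropy_of_determined (w : A → E → Y → ℝ) (g : E → Y → ℝ)
    (pY : Y → ℝ) (hw : ∀ a e y, 0 ≤ w a e y)
    (hdet : ∀ a y e e', 0 < w a e y → 0 < w a e' y → e = e')
    (hg : ∀ e y, ∑ a, w a e y = g e y) :
    condMutualInfo w g pY = condEntropy g pY := by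
  have hterm : ∀ a e y,
      w a e y * Real.log (w a e y * pY y / ((∑ e', w a e' y) * g e y))
        = w a e y * Real.log (pY y / g e y) := by
    intro a e y
    rcases (hw a e y).eq_or_lt with h | h
    · simp [← h]
    · have hsum : ∑ e', w a e' y = w a e y :=
        sum_eq_single e (fun e' _ he' => ((hw a e' y).eq_or_lt.resolve_right
          fun h' => he' (hdet a y e' e h' h)).symm) (by simp)
      rw [hsum, mul_div_mul_left _ _ h.ne']
  calc condMutualInfo w g pY = ∑ e, ∑ y, ∑ a, w a e y * Real.log (pY y / g e y) := by
        simp only [condMutualInfo, hterm]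
        rw [sum_comm]
        exact sum_congr rfl fun e _ => sum_comm
    _ = ∑ e, ∑ y, g e y * Real.log (pY y / g e y) := by simp only [← sum_mul, hg]
    _ = condEntropy g pY := by
        simp only [condEntropy, ← inv_div (g _ _), Real.log_inv, mul_neg, sum_neg_distrib]

end CondEntropy

section SecureComputation

variable {M X Y Z E : Type} {pXY : X → Y → ℝ} {pZ : Z → X → Y → ℝ} {sim : X → X → Prop}
  {f : X → E}

lemma class_eq_of_joint_pos (hXYnn : ∀ x y, 0 ≤ pXY x y) (hZnn : ∀ z x y, 0 ≤ pZ z x y)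
    (hsim : ∀ x x', sim x x' ↔ ∃ (y : Y) (z : Z),
      pXY x y > 0 ∧ pXY x' y > 0 ∧ pZ z x y > 0 ∧ pZ z x' y > 0)
    (hf : ∀ x x', f x = f x' ↔ Relation.ReflTransGen sim x x') {x x' : X} {y : Y} {z : Z}
    (h : 0 < pXY x y * pZ z x y) (h' : 0 < pXY x' y * pZ z x' y) : f x = f x' :=
  (hf x x').2 <| .single <| (hsim x x').2
    ⟨y, z, pos_of_mul_pos_left h (hZnn z x y), pos_of_mul_pos_left h' (hZnn z x' y),
      pos_of_mul_pos_right h (hXYnn x y), pos_of_mul_pos_right h' (hXYnn x' y)⟩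

lemma sum_sum_eq_pXY [Fintype M] [Fintype Z] {p : M → X → Y → Z → ℝ}
    (hZsum : ∀ x y, ∑ z, pZ z x y = 1)
    (hmarg : ∀ x y z, ∑ m, p m x y z = pXY x y * pZ z x y) (x : X) (y : Y) :
    ∑ m, ∑ z, p m x y z = pXY x y := by
  rw [sum_comm]
  simp only [hmarg, ← mul_sum, hZsum, mul_one]

variable [Fintype X] [DecidableEq E]

lemma class_eq_of_pEYZc_pos (hXYnn : ∀ x y, 0 ≤ pXY x y) (hZnn : ∀ z x y, 0 ≤ pZ z x y)
    (hsim : ∀ x x', sim x x' ↔ ∃ (y : Y) (z : Z),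
      pXY x y > 0 ∧ pXY x' y > 0 ∧ pZ z x y > 0 ∧ pZ z x' y > 0)
    (hf : ∀ x x', f x = f x' ↔ Relation.ReflTransGen sim x x') {e e' : E} {y : Y} {z : Z}
    (h : 0 < pEYZc pXY pZ f e y z) (h' : 0 < pEYZc pXY pZ f e' y z) : e = e' := by
  have hnn : ∀ x, 0 ≤ pXY x y * pZ z x y := fun x => mul_nonneg (hXYnn x y) (hZnn z x y)
  obtain ⟨x, rfl, hx⟩ := exists_of_sum_ite_pos hnn h
  obtain ⟨x', rfl, hx'⟩ := exists_of_sum_ite_pos hnn h'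
  exact class_eq_of_joint_pos hXYnn hZnn hsim hf hx hx'

lemma sum_pEYc [Fintype E] (pXY : X → Y → ℝ) (f : X → E) (y : Y) :
    ∑ e, pEYc pXY f e y = ∑ x, pXY x y :=
  sum_sum_ite_eq_sum f _

lemma class_eq_of_channel_pos [Fintype E] [Fintype Z] {U : Type} {q : U → E → ℝ}
    (hXYnn : ∀ x y, 0 ≤ pXY x y) (hZnn : ∀ z x y, 0 ≤ pZ z x y)
    (hZsum : ∀ x y, ∑ z, pZ z x y = 1)
    (hsim : ∀ x x', sim x x' ↔ ∃ (y : Y) (z : Z),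
      pXY x y > 0 ∧ pXY x' y > 0 ∧ pZ z x y > 0 ∧ pZ z x' y > 0)
    (hf : ∀ x x', f x = f x' ↔ Relation.ReflTransGen sim x x') (hq0 : ∀ u e, 0 ≤ q u e)
    (hmarkov : ∀ (u : U) (e : E) (y : Y) (z : Z), q u e * pEYc pXY f e y > 0 →
      pEYZc pXY pZ f e y z / pEYc pXY f e y
        = (∑ e', q u e' * pEYZc pXY pZ f e' y z) / (∑ e', q u e' * pEYc pXY f e' y))
    {u : U} {e e' : E} {y : Y} (h : 0 < q u e * pEYc pXY f e y)
    (h' : 0 < q u e' * pEYc pXY f e' y) : e = e' := by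
  have hE := pos_of_mul_pos_right h (hq0 u e)
  have hE' := pos_of_mul_pos_right h' (hq0 u e')
  obtain ⟨x, rfl, hx⟩ := exists_of_sum_ite_pos (hXYnn · y) hE
  obtain ⟨z, -, hz⟩ := (sum_pos_iff_of_nonneg fun z _ => hZnn z x y).1
    (by rw [hZsum]; exact one_pos)
  have hEZ : 0 < pEYZc pXY pZ f (f x) y z :=
    sum_pos' (fun x' _ => ite_nonneg (mul_nonneg (hXYnn x' y) (hZnn z x' y)) le_rfl)
      ⟨x, mem_univ x, by simpa using mul_pos hx hz⟩
  exact class_eq_of_pEYZc_pos hXYnn hZnn hsim hf hEZ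
    (pos_of_div_eq_of_div_eq (hmarkov u _ y z h) (hmarkov u e' y z h') hEZ hE hE')

variable [Fintype Z]

lemma pMEY_eq_sum_ite (p : M → X → Y → Z → ℝ) (f : X → E) (m : M) (e : E) (y : Y) :
    pMEY p f m e y = ∑ x, if f x = e then ∑ z, p m x y z else 0 := by
  simp only [pMEY, sum_ite_irrel, sum_const_zero]

lemma sum_pMEY_eq_sum_sum [Fintype E] (p : M → X → Y → Z → ℝ) (f : X → E) (m : M) (y : Y) :
    ∑ e, pMEY p f m e y = ∑ x, ∑ z, p m x y z := by
  simp only [pMEY_eq_sum_ite]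
  exact sum_sum_ite_eq_sum f _

variable [Fintype M] {p : M → X → Y → Z → ℝ}

lemma sum_pMEY_eq_pEYc (hZsum : ∀ x y, ∑ z, pZ z x y = 1)
    (hmarg : ∀ x y z, ∑ m, p m x y z = pXY x y * pZ z x y) (f : X → E) (e : E) (y : Y) :
    ∑ m, pMEY p f m e y = pEYc pXY f e y := by
  simp only [pEYc, pMEY_eq_sum_ite]
  rw [sum_comm]
  simp only [sum_ite_irrel, sum_const_zero, sum_sum_eq_pXY hZsum hmarg]

lemma IMEgY_eq_condMutualInfo [Fintype Y] [Fintype E] (hZsum : ∀ x y, ∑ z, pZ z x y = 1)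
    (hmarg : ∀ x y z, ∑ m, p m x y z = pXY x y * pZ z x y) (f : X → E) :
    IMEgY p f = condMutualInfo (pMEY p f) (pEYc pXY f) (fun y => ∑ x, pXY x y) := by
  have hY : ∀ y, ∑ m, ∑ x, ∑ z, p m x y z = ∑ x, pXY x y := fun y => by
    rw [sum_comm]
    simp only [sum_sum_eq_pXY hZsum hmarg]
  simp only [IMEgY, condMutualInfo, hY, sum_pMEY_eq_sum_sum, sum_pMEY_eq_pEYc hZsum hmarg]

lemma class_eq_of_pMEY_pos (hXYnn : ∀ x y, 0 ≤ pXY x y) (hZnn : ∀ z x y, 0 ≤ pZ z x y)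
    (hsim : ∀ x x', sim x x' ↔ ∃ (y : Y) (z : Z),
      pXY x y > 0 ∧ pXY x' y > 0 ∧ pZ z x y > 0 ∧ pZ z x' y > 0)
    (hf : ∀ x x', f x = f x' ↔ Relation.ReflTransGen sim x x') (hnn : ∀ m x y z, 0 ≤ p m x y z)
    (hmarg : ∀ x y z, ∑ m, p m x y z = pXY x y * pZ z x y)
    (hmarkov : ∀ m x y z, (∑ z', p m x y z') > 0 →
      p m x y z / (∑ z', p m x y z')
        = (∑ x', p m x' y z) / (∑ x', ∑ z', p m x' y z'))
    {m : M} {y : Y} {e e' : E} (h : 0 < pMEY p f m e y) (h' : 0 < pMEY p f m e' y) :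
    e = e' := by
  have hjoint : ∀ x z, 0 < p m x y z → 0 < pXY x y * pZ z x y := fun x z hp =>
    hmarg x y z ▸ hp.trans_le (single_le_sum (fun m' _ => hnn m' x y z) (mem_univ m))
  have hnn' : ∀ x, 0 ≤ ∑ z, p m x y z := fun x => sum_nonneg fun z _ => hnn m x y z
  rw [pMEY_eq_sum_ite] at h h'
  obtain ⟨x, rfl, hx⟩ := exists_of_sum_ite_pos hnn' h
  obtain ⟨x', rfl, hx'⟩ := exists_of_sum_ite_pos hnn' h'
  obtain ⟨z, -, hz⟩ := (sum_pos_iff_of_nonneg fun z _ => hnn m x y z).1 hx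
  have hz' : 0 < p m x' y z :=
    pos_of_div_eq_of_div_eq (hmarkov m x y z hx) (hmarkov m x' y z hx') hz hx hx'
  exact class_eq_of_joint_pos hXYnn hZnn hsim hf (hjoint x z hz) (hjoint x' z hz')

end SecureComputation

theorem stmt_15_general {M X Y Z E : Type} [Fintype M] [Fintype X] [Fintype Y]
    [Fintype Z] [Fintype E] [DecidableEq E]
    (pXY : X → Y → ℝ) (pZ : Z → X → Y → ℝ)
    (hXYnn : ∀ x y, 0 ≤ pXY x y)
    (hZnn : ∀ z x y, 0 ≤ pZ z x y) (hZsum : ∀ x y, ∑ z, pZ z x y = 1)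
    -- the relation ∼ and secure computability
    (sim : X → X → Prop)
    (hsim : ∀ x x', sim x x' ↔ ∃ (y : Y) (z : Z),
      pXY x y > 0 ∧ pXY x' y > 0 ∧ pZ z x y > 0 ∧ pZ z x' y > 0)
    -- f maps each x to its equivalence class under ≡
    (f : X → E)
    (hf : ∀ x x', f x = f x' ↔ Relation.ReflTransGen sim x x')
    -- the protocol-induced joint distribution
    (p : M → X → Y → Z → ℝ)
    (hnn : ∀ m x y z, 0 ≤ p m x y z)
    (hmarg : ∀ x y z, ∑ m, p m x y z = pXY x y * pZ z x y)
    -- Markov chain Z − (M,Y) − X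
    (hMC3 : ∀ m x y z, (∑ z', p m x y z') > 0 →
      p m x y z / (∑ z', p m x y z')
        = (∑ x', p m x' y z) / (∑ x', ∑ z', p m x' y z')) :
    IMEgY p f = HEgY pXY f ∧
    sInf {r : ℝ | ∃ (U : Type) (i : Fintype U) (q : U → E → ℝ),
      (∀ u e, 0 ≤ q u e) ∧
      (∀ e, (@Finset.univ U i).sum (fun u => q u e) = 1) ∧
      -- Markov chain Z − (U,Y) − X_EQ
      (∀ (u : U) (e : E) (y : Y) (z : Z), q u e * pEYc pXY f e y > 0 →
        pEYZc pXY pZ f e y z / pEYc pXY f e y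
          = (∑ e', q u e' * pEYZc pXY pZ f e' y z)
              / (∑ e', q u e' * pEYc pXY f e' y)) ∧
      -- r = I(U; X_EQ | Y)
      r = (@Finset.univ U i).sum (fun u => ∑ e, ∑ y,
            (q u e * pEYc pXY f e y) * Real.log
              ((q u e * pEYc pXY f e y) * (∑ e', pEYc pXY f e' y) /
                ((∑ e', q u e' * pEYc pXY f e' y) * pEYc pXY f e y)))}
    = HEgY pXY f := by
  have hEYnn : ∀ e y, 0 ≤ pEYc pXY f e y := fun e y =>
    sum_nonneg fun x _ => ite_nonneg (hXYnn x y) le_rfl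
  have hHEgY : HEgY pXY f = condEntropy (pEYc pXY f) (fun y => ∑ x, pXY x y) := rfl
  refine ⟨?_, csInf_eq_of_forall_eq
    ⟨_, E, inferInstance, fun u e => if u = e then 1 else 0, ?_, ?_, ?_, rfl⟩ ?_⟩
  · rw [IMEgY_eq_condMutualInfo hZsum hmarg, hHEgY]
    exact condMutualInfo_eq_condEntropy_of_determined _ _ _
      (fun m e y => sum_nonneg fun x _ => sum_nonneg fun z _ => ite_nonneg (hnn m x y z) le_rfl)
      (fun m y e e' => class_eq_of_pMEY_pos hXYnn hZnn hsim hf hnn hmarg hMC3)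
      (sum_pMEY_eq_pEYc hZsum hmarg f)
  · exact fun u e => ite_nonneg zero_le_one le_rfl
  · simp
  · intro u e y z h
    obtain rfl : u = e := by by_contra hne; simp [hne] at h
    simp [ite_mul, sum_ite_eq]
  · rintro r ⟨U, i, q, hq0, hq1, hmarkov, rfl⟩
    refine (condMutualInfo_eq_condEntropy_of_determined _ _ _
      (fun u e y => mul_nonneg (hq0 u e) (hEYnn e y))
      (fun u y e e' => class_eq_of_channel_pos hXYnn hZnn hZsum hsim hf hq0 hmarkov)
      (fun e y => by rw [← sum_mul, hq1, one_mul])).trans ?_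
    simp only [condEntropy, HEgY, sum_pEYc]

/-- For any perfectly secure protocol for a securely computable
`(p_{XY}, p_{Z|XY})`, with `X_EQ = f(X)` the equivalence class of `X`:
`I(M; X_EQ | Y) = H(X_EQ | Y)`; consequently the minimum of `I(U; X_EQ | Y)`
over `p_{U|X_EQ}` with `U − X_EQ − (Y,Z)` and `Z − (U,Y) − X_EQ` equals
`H(X_EQ | Y)`. -/
theorem stmt_15 {M X Y Z E : Type} [Fintype M] [Fintype X] [Fintype Y]
    [Fintype Z] [Fintype E] [DecidableEq E]
    (pXY : X → Y → ℝ) (pZ : Z → X → Y → ℝ)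
    (hXYnn : ∀ x y, 0 ≤ pXY x y) (hXYsum : ∑ x, ∑ y, pXY x y = 1)
    (hZnn : ∀ z x y, 0 ≤ pZ z x y) (hZsum : ∀ x y, ∑ z, pZ z x y = 1)
    -- the relation ∼ and secure computability
    (sim : X → X → Prop)
    (hsim : ∀ x x', sim x x' ↔ ∃ (y : Y) (z : Z),
      pXY x y > 0 ∧ pXY x' y > 0 ∧ pZ z x y > 0 ∧ pZ z x' y > 0)
    (hmono : ∀ x x', Relation.ReflTransGen sim x x' →
      ∀ y, pXY x y > 0 → pXY x' y > 0 → ∀ z, pZ z x y = pZ z x' y)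
    -- f maps each x to its equivalence class under ≡
    (f : X → E)
    (hf : ∀ x x', f x = f x' ↔ Relation.ReflTransGen sim x x')
    -- the protocol-induced joint distribution
    (p : M → X → Y → Z → ℝ)
    (hnn : ∀ m x y z, 0 ≤ p m x y z)
    (hmarg : ∀ x y z, ∑ m, p m x y z = pXY x y * pZ z x y)
    -- Markov chain M − X − (Y,Z)
    (hMC1 : ∀ m x y z, (∑ m', p m' x y z) > 0 →
      p m x y z / (∑ m', p m' x y z)
        = (∑ y', ∑ z', p m x y' z') / (∑ m', ∑ y', ∑ z', p m' x y' z'))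
    -- Markov chain M − (Y,Z) − X
    (hMC2 : ∀ m x y z, (∑ m', p m' x y z) > 0 →
      p m x y z / (∑ m', p m' x y z)
        = (∑ x', p m x' y z) / (∑ m', ∑ x', p m' x' y z))
    -- Markov chain Z − (M,Y) − X
    (hMC3 : ∀ m x y z, (∑ z', p m x y z') > 0 →
      p m x y z / (∑ z', p m x y z')
        = (∑ x', p m x' y z) / (∑ x', ∑ z', p m x' y z')) :
    IMEgY p f = HEgY pXY f ∧
    sInf {r : ℝ | ∃ (U : Type) (i : Fintype U) (q : U → E → ℝ),
      (∀ u e, 0 ≤ q u e) ∧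
      (∀ e, (@Finset.univ U i).sum (fun u => q u e) = 1) ∧
      -- Markov chain Z − (U,Y) − X_EQ
      (∀ (u : U) (e : E) (y : Y) (z : Z), q u e * pEYc pXY f e y > 0 →
        pEYZc pXY pZ f e y z / pEYc pXY f e y
          = (∑ e', q u e' * pEYZc pXY pZ f e' y z)
              / (∑ e', q u e' * pEYc pXY f e' y)) ∧
      -- r = I(U; X_EQ | Y)
      r = (@Finset.univ U i).sum (fun u => ∑ e, ∑ y,
            (q u e * pEYc pXY f e y) * Real.log
              ((q u e * pEYc pXY f e y) * (∑ e', pEYc pXY f e' y) /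
                ((∑ e', q u e' * pEYc pXY f e' y) * pEYc pXY f e y)))}
    = HEgY pXY f :=
  stmt_15_general pXY pZ hXYnn hZnn hZsum sim hsim f hf p hnn hmarg hMC3

end
end
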